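/- Simplex-wise injectivity on finite families: Let F be a finite family of finite embedded simplicial complexes in ℝ^d, colored with common GSWL data, fix L ≥ 0, let m be as in the finite-family realizability theorem, and let H ≥ 3m. Then there exist architecture parameters E, (φ_ℓ), (ψ_ℓ), (μ_ℓ) such that for all simplices σ of K₁ ∈ F and σ' of K₂ ∈ F, h^L_σ = h^L_{σ'} if and only if c^L_σ = c^L_{σ'}; that is, the layer-L hidden state is injective in the round-L GSWL color on the family F. -/
import Mathlib


open Finset MeasureTheory
attribute [local instance] Classical.propDecidable
open scoped RealInnerProductSpace BigOperators ENNReal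

/-- `ℝ^n` as Euclidean space. -/
abbrev Eu (n : ℕ) : Type := EuclideanSpace ℝ (Fin n)

/-- A finite abstract simplicial complex on the vertex type `V`:
a finite collection of nonempty finite vertex sets closed under taking nonempty subsets. -/
def IsComplex {V : Type*} [DecidableEq V] (K : Finset (Finset V)) : Prop :=
  (∀ σ ∈ K, σ.Nonempty) ∧ ∀ σ ∈ K, ∀ τ, τ ⊆ σ → τ.Nonempty → τ ∈ K

/-- The boundary `∂σ`: faces of `σ` in `K` of dimension `dim σ - 1`. -/
def bdry {V : Type*} [DecidableEq V] (K : Finset (Finset V)) (σ : Finset V) :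
    Finset (Finset V) :=
  K.filter fun τ => τ ⊆ σ ∧ τ.card + 1 = σ.card

/-- The coboundary `coface σ`: simplices of `K` of dimension `dim σ + 1` containing `σ`. -/
def cofc {V : Type*} [DecidableEq V] (K : Finset (Finset V)) (σ : Finset V) :
    Finset (Finset V) :=
  K.filter fun ρ => σ ⊆ ρ ∧ ρ.card = σ.card + 1

/-- GSWL data: a color set `C` containing all pairs `(k, f)` (the vertex case carrying a
point of `ℝ^d` as its feature), feature functions `Φ_k` on finite point sets in `ℝ^d`,
and an injective `HASH` on triples (color, boundary multiset, coboundary multiset). -/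
structure GSWLData (d : ℕ) (C F : Type*) where
  /-- the color `(0, p)` of a vertex embedded at `p ∈ ℝ^d` -/
  vcol : Eu d → C
  /-- the color `(k, f)` of a `k`-simplex carrying feature `f` -/
  scol : ℕ → F → C
  /-- the feature functions `Φ_k` -/
  feat : ℕ → Finset (Eu d) → F
  /-- the hash function -/
  hash : C → Multiset C → Multiset C → C
  vcol_inj : Function.Injective vcol
  scol_inj : ∀ ⦃k f k' f'⦄, scol k f = scol k' f' → k = k' ∧ f = f'
  vcol_ne_scol : ∀ p k f, vcol p ≠ scol k f
  hash_inj : ∀ ⦃c M N c' M' N'⦄, hash c M N = hash c' M' N' → c = c' ∧ M = M' ∧ N = N'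

/-- Initial GSWL color: `c⁰_{{v}} = (0, x_v)` on a vertex and
`c⁰_σ = (k, Φ_k {x_v : v ∈ σ})` on a `k`-simplex with `k ≥ 1`. -/
noncomputable def gcol0 {V : Type*} [DecidableEq V] {d : ℕ} {C F : Type*}
    (G : GSWLData d C F) (x : V → Eu d) (σ : Finset V) : C :=
  if h : ∃ v, σ = {v} then G.vcol (x h.choose)
  else G.scol (σ.card - 1) (G.feat (σ.card - 1) (σ.image x))

/-- GSWL color refinement:
`c^{ℓ+1}_σ = HASH (c^ℓ_σ, {{c^ℓ_τ : τ ∈ ∂σ}}, {{c^ℓ_ρ : ρ ∈ coface σ}})`. -/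
noncomputable def gcol {V : Type*} [DecidableEq V] {d : ℕ} {C F : Type*}
    (G : GSWLData d C F) (K : Finset (Finset V)) (x : V → Eu d) :
    ℕ → Finset V → C
  | 0 => gcol0 G x
  | ℓ + 1 => fun σ =>
      G.hash (gcol G K x ℓ σ) ((bdry K σ).val.map (gcol G K x ℓ))
        ((cofc K σ).val.map (gcol G K x ℓ))

/-- Hidden states of the simplicial message-passing architecture: `h⁰_σ = E (c⁰_σ)` and
`h^{ℓ+1}_σ = μ_ℓ (h^ℓ_σ, Σ_{τ∈∂σ} φ_ℓ h^ℓ_τ, Σ_{ρ∈coface σ} ψ_ℓ h^ℓ_ρ)`. -/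
noncomputable def hid {V : Type*} [DecidableEq V] {d : ℕ} {C F : Type*} {H : ℕ}
    (G : GSWLData d C F) (E : C → Eu H) (φ ψ : ℕ → Eu H → Eu H)
    (μ : ℕ → Eu H × Eu H × Eu H → Eu H)
    (K : Finset (Finset V)) (x : V → Eu d) : ℕ → Finset V → Eu H
  | 0 => fun σ => E (gcol0 G x σ)
  | ℓ + 1 => fun σ =>
      μ ℓ (hid G E φ ψ μ K x ℓ σ,
        ∑ τ ∈ bdry K σ, φ ℓ (hid G E φ ψ μ K x ℓ τ),
        ∑ ρ ∈ cofc K σ, ψ ℓ (hid G E φ ψ μ K x ℓ ρ))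


/-- auxiliary: index of a color within a finite color set, as an element of `Fin H`. -/
noncomputable def encFin {C : Type*} (S : Finset C) (H : ℕ) (hH : 0 < H) (c : C) : Fin H :=
  if h : c ∈ S ∧ S.card ≤ H then
    ⟨(S.equivFin ⟨c, h.1⟩ : Fin S.card).1, lt_of_lt_of_le (Fin.is_lt _) h.2⟩
  else ⟨0, hH⟩

lemma encFin_injOn {C : Type*} {S : Finset C} {H : ℕ} {hH : 0 < H} (hc : S.card ≤ H)
    {c c' : C} (h1 : c ∈ S) (h2 : c' ∈ S)
    (h : encFin S H hH c = encFin S H hH c') : c = c' := by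
  have e1 : c ∈ S ∧ S.card ≤ H := ⟨h1, hc⟩
  have e2 : c' ∈ S ∧ S.card ≤ H := ⟨h2, hc⟩
  rw [encFin, encFin, dif_pos e1, dif_pos e2] at h
  have hv : ((S.equivFin ⟨c, h1⟩ : Fin S.card) : ℕ) = ((S.equivFin ⟨c', h2⟩ : Fin S.card) : ℕ) :=
    congrArg (fun z : Fin H => z.val) h
  exact congrArg Subtype.val (S.equivFin.injective (Fin.val_injective hv))

/-- auxiliary: one-hot encoding of a color. -/
noncomputable def encV {C : Type*} (S : Finset C) (H : ℕ) (hH : 0 < H) (c : C) : Eu H :=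
  EuclideanSpace.single (encFin S H hH c) 1

lemma encV_injOn {C : Type*} {S : Finset C} {H : ℕ} {hH : 0 < H} (hc : S.card ≤ H)
    {c c' : C} (h1 : c ∈ S) (h2 : c' ∈ S)
    (h : encV S H hH c = encV S H hH c') : c = c' := by
  refine encFin_injOn (hH := hH) hc h1 h2 ?_
  by_contra hne
  have hc2 := congrFun (congrArg (fun (v : Eu H) => (v : Fin H → ℝ)) h) (encFin S H hH c')
  simp only [encV, EuclideanSpace.single_apply] at hc2
  rw [if_neg (fun hh => hne hh.symm)] at hc2
  simp at hc2

lemma eval_single_sum {H : ℕ} (M : Multiset (Fin H)) (j : Fin H) :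
    ((M.map (fun i => EuclideanSpace.single i (1:ℝ))).sum : Eu H) j = (M.count j : ℝ) := by
  induction M using Multiset.induction with
  | empty => simp
  | cons a M ih =>
      simp only [Multiset.map_cons, Multiset.sum_cons, Multiset.count_cons, PiLp.add_apply,
        EuclideanSpace.single_apply, ih]
      push_cast
      by_cases h : j = a
      · simp [h]; ring
      · simp [h]

lemma multiset_map_injOn {α β : Type*} {f : α → β} {s : Set α} (hf : Set.InjOn f s) :
    ∀ (M N : Multiset α), (∀ a ∈ M, a ∈ s) → (∀ a ∈ N, a ∈ s) → M.map f = N.map f → M = N := by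
  intro M
  induction M using Multiset.induction with
  | empty =>
      intro N _ _ h
      have : N.map f = 0 := h.symm
      simpa using (Multiset.map_eq_zero.mp this).symm
  | cons a M ih =>
      intro N hM hN h
      have hmem : f a ∈ N.map f := by
        rw [← h]; exact Multiset.mem_map_of_mem f (Multiset.mem_cons_self a M)
      obtain ⟨b, hbN, hba⟩ := Multiset.mem_map.mp hmem
      have hab : b = a := hf (hN b hbN) (hM a (Multiset.mem_cons_self a M)) hba
      subst hab
      obtain ⟨N', rfl⟩ := Multiset.exists_cons_of_mem hbN
      simp only [Multiset.map_cons, Multiset.cons_inj_right] at h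
      rw [ih N' (fun x hx => hM x (Multiset.mem_cons_of_mem hx))
        (fun x hx => hN x (Multiset.mem_cons_of_mem hx)) h]

lemma encV_sum_injOn {C : Type*} {S : Finset C} {H : ℕ} {hH : 0 < H} (hc : S.card ≤ H)
    {M N : Multiset C} (hM : ∀ c ∈ M, c ∈ S) (hN : ∀ c ∈ N, c ∈ S)
    (h : (M.map (encV S H hH)).sum = (N.map (encV S H hH)).sum) : M = N := by
  have hmap : M.map (encFin S H hH) = N.map (encFin S H hH) := by
    refine Multiset.ext.mpr fun j => ?_
    have hM' := eval_single_sum (M.map (encFin S H hH)) j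
    have hN' := eval_single_sum (N.map (encFin S H hH)) j
    rw [Multiset.map_map] at hM' hN'
    have : ((M.map (encFin S H hH)).count j : ℝ) = ((N.map (encFin S H hH)).count j : ℝ) := by
      rw [← hM', ← hN']
      exact congrFun (congrArg (fun (v : Eu H) => (v : Fin H → ℝ)) h) j
    exact_mod_cast this
  exact multiset_map_injOn (fun c h1 c' h2 hcc => encFin_injOn hc h1 h2 hcc) M N hM hN hmap

/-- decode a color from its one-hot encoding -/
noncomputable def decC {C : Type*} [Nonempty C] (S : Finset C) (H : ℕ) (hH : 0 < H) :
    Eu H → C :=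
  Function.invFunOn (encV S H hH) S

/-- decode a multiset of colors from the sum of the one-hot encodings -/
noncomputable def decM {C : Type*} (S : Finset C) (H : ℕ) (hH : 0 < H) :
    Eu H → Multiset C :=
  Function.invFunOn (fun M => (M.map (encV S H hH)).sum) {M | ∀ c ∈ M, c ∈ S}

lemma decC_encV {C : Type*} [Nonempty C] {S : Finset C} {H : ℕ} (hH : 0 < H)
    (hc : S.card ≤ H) {c : C} (h : c ∈ S) : decC S H hH (encV S H hH c) = c := by
  have hinj : Set.InjOn (encV S H hH) (S : Set C) := fun a ha b hb hab =>
    encV_injOn (hH := hH) hc (Finset.mem_coe.mp ha) (Finset.mem_coe.mp hb) hab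
  exact hinj.leftInvOn_invFunOn (Finset.mem_coe.mpr h)

lemma decM_sum {C : Type*} {S : Finset C} {H : ℕ} (hH : 0 < H) (hc : S.card ≤ H)
    {M : Multiset C} (h : ∀ c ∈ M, c ∈ S) :
    decM S H hH ((M.map (encV S H hH)).sum) = M := by
  have hinj : Set.InjOn (fun M : Multiset C => (M.map (encV S H hH)).sum)
      {M | ∀ c ∈ M, c ∈ S} := fun M1 h1 M2 h2 he =>
    encV_sum_injOn (hH := hH) hc h1 h2 he
  exact hinj.leftInvOn_invFunOn h

lemma hid_eq_encV {V : Type*} [DecidableEq V] {d : ℕ} {C F : Type*} [Nonempty C]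
    (G : GSWLData d C F) {ι : Type*}
    (Ks : ι → Finset (Finset V)) (xs : ι → V → Eu d)
    (S : ℕ → Finset C) {H : ℕ} (hH0 : 0 < H) (L : ℕ)
    (hcard : ∀ ℓ ≤ L, (S ℓ).card ≤ H)
    (hmem : ∀ ℓ (i : ι) σ, σ ∈ Ks i → gcol G (Ks i) (xs i) ℓ σ ∈ S ℓ)
    (E : C → Eu H) (φ ψ : ℕ → Eu H → Eu H) (μ : ℕ → Eu H × Eu H × Eu H → Eu H)
    (hE : ∀ c, E c = encV (S 0) H hH0 c)
    (hφ : ∀ ℓ x, φ ℓ x = x) (hψ : ∀ ℓ x, ψ ℓ x = x)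
    (hμ : ∀ ℓ p, μ ℓ p = encV (S (ℓ + 1)) H hH0
      (G.hash (decC (S ℓ) H hH0 p.1) (decM (S ℓ) H hH0 p.2.1) (decM (S ℓ) H hH0 p.2.2))) :
    ∀ ℓ, ℓ ≤ L → ∀ (i : ι), ∀ σ ∈ Ks i,
      hid G E φ ψ μ (Ks i) (xs i) ℓ σ = encV (S ℓ) H hH0 (gcol G (Ks i) (xs i) ℓ σ) := by
  intro ℓ
  induction ℓ with
  | zero =>
      intro _ i σ hσ
      show E (gcol0 G (xs i) σ) = _
      rw [hE]
      rfl
  | succ ℓ ih =>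
      intro hℓ i σ hσ
      have hℓ' : ℓ ≤ L := Nat.le_of_succ_le hℓ
      have hb : (∑ τ ∈ bdry (Ks i) σ, φ ℓ (hid G E φ ψ μ (Ks i) (xs i) ℓ τ))
          = (((bdry (Ks i) σ).val.map (gcol G (Ks i) (xs i) ℓ)).map (encV (S ℓ) H hH0)).sum := by
        rw [Multiset.map_map]
        rw [show (((bdry (Ks i) σ).val.map (encV (S ℓ) H hH0 ∘ gcol G (Ks i) (xs i) ℓ)).sum)
            = ∑ τ ∈ bdry (Ks i) σ, encV (S ℓ) H hH0 (gcol G (Ks i) (xs i) ℓ τ) from rfl]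
        exact Finset.sum_congr rfl fun τ hτ => by
          rw [hφ, ih hℓ' i τ (Finset.mem_filter.mp hτ).1]
      have hc : (∑ ρ ∈ cofc (Ks i) σ, ψ ℓ (hid G E φ ψ μ (Ks i) (xs i) ℓ ρ))
          = (((cofc (Ks i) σ).val.map (gcol G (Ks i) (xs i) ℓ)).map (encV (S ℓ) H hH0)).sum := by
        rw [Multiset.map_map]
        rw [show (((cofc (Ks i) σ).val.map (encV (S ℓ) H hH0 ∘ gcol G (Ks i) (xs i) ℓ)).sum)
            = ∑ ρ ∈ cofc (Ks i) σ, encV (S ℓ) H hH0 (gcol G (Ks i) (xs i) ℓ ρ) from rfl]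
        exact Finset.sum_congr rfl fun ρ hρ => by
          rw [hψ, ih hℓ' i ρ (Finset.mem_filter.mp hρ).1]
      have hMmem : ∀ c ∈ (bdry (Ks i) σ).val.map (gcol G (Ks i) (xs i) ℓ), c ∈ S ℓ := by
        intro c hcm
        obtain ⟨τ, hτ, rfl⟩ := Multiset.mem_map.mp hcm
        exact hmem ℓ i τ (Finset.mem_filter.mp hτ).1
      have hNmem : ∀ c ∈ (cofc (Ks i) σ).val.map (gcol G (Ks i) (xs i) ℓ), c ∈ S ℓ := by
        intro c hcm
        obtain ⟨ρ, hρ, rfl⟩ := Multiset.mem_map.mp hcm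
        exact hmem ℓ i ρ (Finset.mem_filter.mp hρ).1
      show μ ℓ (hid G E φ ψ μ (Ks i) (xs i) ℓ σ,
          ∑ τ ∈ bdry (Ks i) σ, φ ℓ (hid G E φ ψ μ (Ks i) (xs i) ℓ τ),
          ∑ ρ ∈ cofc (Ks i) σ, ψ ℓ (hid G E φ ψ μ (Ks i) (xs i) ℓ ρ)) = _
      rw [hb, hc, ih hℓ' i σ hσ, hμ]
      simp only
      rw [decC_encV hH0 (hcard ℓ hℓ') (hmem ℓ i σ hσ),
        decM_sum hH0 (hcard ℓ hℓ') hMmem, decM_sum hH0 (hcard ℓ hℓ') hNmem]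
      rfl

/-- **Simplex-wise injectivity on finite families.** For a finite family of finite
embedded simplicial complexes colored with common GSWL data, `m` the maximal number of
distinct round-`ℓ` GSWL colors for `ℓ ≤ L`, and `H ≥ 3m`, there exist architecture
parameters such that the layer-`L` hidden state is injective in the round-`L` GSWL color:
`h^L_σ = h^L_{σ'}` iff `c^L_σ = c^L_{σ'}` across the family. -/
theorem simplexwise_injectivity
    {V : Type*} [DecidableEq V] {d : ℕ} {C F : Type*}
    (G : GSWLData d C F)
    {ι : Type*} [Fintype ι]
    (Ks : ι → Finset (Finset V)) (xs : ι → V → Eu d)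
    (hKs : ∀ i, IsComplex (Ks i)) (L : ℕ)
    (mℓ : ℕ → ℕ)
    (hmℓ : ∀ ℓ, mℓ ℓ =
      (Finset.univ.biUnion fun i => (Ks i).image (gcol G (Ks i) (xs i) ℓ)).card)
    (m : ℕ) (hm : m = (Finset.range (L + 1)).sup mℓ)
    (H : ℕ) (hH : 3 * m ≤ H) :
    ∃ (E : C → Eu H) (φ ψ : ℕ → Eu H → Eu H) (μ : ℕ → Eu H × Eu H × Eu H → Eu H),
      ∀ i j : ι, ∀ σ ∈ Ks i, ∀ σ' ∈ Ks j,
        (hid G E φ ψ μ (Ks i) (xs i) L σ = hid G E φ ψ μ (Ks j) (xs j) L σ' ↔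
          gcol G (Ks i) (xs i) L σ = gcol G (Ks j) (xs j) L σ') := by
  classical
  by_cases hne : ∃ i, ∃ σ, σ ∈ Ks i
  case neg =>
    exact ⟨fun _ => 0, fun _ x => x, fun _ x => x, fun _ _ => 0,
      fun i j σ hσ σ' hσ' => absurd ⟨i, σ, hσ⟩ hne⟩
  case pos =>
  obtain ⟨i0, σ0, hσ0⟩ := hne
  haveI : Nonempty C := ⟨gcol G (Ks i0) (xs i0) 0 σ0⟩
  set S : ℕ → Finset C := fun ℓ =>
    Finset.univ.biUnion fun i => (Ks i).image (gcol G (Ks i) (xs i) ℓ) with hS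
  have hmem : ∀ ℓ (i : ι) σ, σ ∈ Ks i → gcol G (Ks i) (xs i) ℓ σ ∈ S ℓ := fun ℓ i σ hσ =>
    Finset.mem_biUnion.mpr ⟨i, Finset.mem_univ i, Finset.mem_image_of_mem _ hσ⟩
  have hcard : ∀ ℓ ≤ L, (S ℓ).card ≤ H := by
    intro ℓ hℓ
    have h2 : mℓ ℓ = (S ℓ).card := hmℓ ℓ
    have h1 : mℓ ℓ ≤ m := hm ▸ Finset.le_sup (Finset.mem_range.mpr (Nat.lt_succ_of_le hℓ))
    omega
  have hH0 : 0 < H :=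
    lt_of_lt_of_le (Finset.card_pos.mpr ⟨_, hmem 0 i0 σ0 hσ0⟩) (hcard 0 (Nat.zero_le L))
  refine ⟨encV (S 0) H hH0, fun _ x => x, fun _ x => x,
    fun ℓ p => encV (S (ℓ + 1)) H hH0
      (G.hash (decC (S ℓ) H hH0 p.1) (decM (S ℓ) H hH0 p.2.1) (decM (S ℓ) H hH0 p.2.2)), ?_⟩
  have key := hid_eq_encV G Ks xs S hH0 L hcard hmem
    (encV (S 0) H hH0) (fun _ x => x) (fun _ x => x)
    (fun ℓ p => encV (S (ℓ + 1)) H hH0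
      (G.hash (decC (S ℓ) H hH0 p.1) (decM (S ℓ) H hH0 p.2.1) (decM (S ℓ) H hH0 p.2.2)))
    (fun _ => rfl) (fun _ _ => rfl) (fun _ _ => rfl) (fun _ _ => rfl)
  intro i j σ hσ σ' hσ'
  rw [key L le_rfl i σ hσ, key L le_rfl j σ' hσ']
  constructor
  · exact fun h =>
      encV_injOn (hH := hH0) (hcard L le_rfl) (hmem L i σ hσ) (hmem L j σ' hσ') h
  · exact fun h => by rw [h]
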